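/- arXiv:2008.05728 — 2 statements merged into one kernel-verified Lean document; each statement's English description precedes it below -/
import Mathlib

section
/- Let g(x) be a monic polynomial of degree n and f(x) a monic polynomial of degree m ≤ n over a field, with g = q·f + r, deg r < m. Define the reversals f_R(x) = x^m f(1/x), g_R(x) = x^n g(1/x), q_R(x) = x^{n−m} q(1/x). Let f̃_R(x) = ∑_{i=0}^{n−m} (1 − f_R(x))^i. Then the coefficient of x^j in f̃_R(x)·g_R(x) agrees with the coefficient of x^j in q_R(x) for every j ≤ n − m; consequently q_i equals the coefficient of x^{n−m−i} in f̃_R·g_R. -/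
/-!
Write `k = n - m`, `q = g /ₘ f` and `r = g %ₘ f`. Reflecting `g = f * q + r` at degree `n`
gives `g_R = f_R * q_R + reflect n r`, and `X ^ (k + 1)` divides `reflect n r` because
`deg r < m`. Since `f_R` has constant coefficient `1`, the geometric sum
`f̃_R = ∑_{i ≤ k} (1 - f_R) ^ i` satisfies `1 - f̃_R * f_R = (1 - f_R) ^ (k + 1) ≡ 0`
modulo `X ^ (k + 1)`. Hence
`f̃_R * g_R - q_R = f̃_R * (g_R - f_R * q_R) - (1 - f̃_R * f_R) * q_R ≡ 0 mod X ^ (k + 1)`,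
and the coefficients of `q` are read off from those of `q_R` since `deg q = k`.
-/

open Polynomial Finset

namespace Polynomial

theorem X_pow_dvd_reflect_of_degree_lt {R : Type*} [Semiring R] {p : R[X]} {m : ℕ}
    (hp : p.degree < m) (N : ℕ) : X ^ (N + 1 - m) ∣ reflect N p := by
  refine X_pow_dvd_iff.mpr fun d hd => ?_
  rw [coeff_reflect, revAt_le (by omega)]
  exact coeff_eq_zero_of_degree_lt (hp.trans_le (by exact_mod_cast (by omega : m ≤ N - d)))

variable {R : Type*} [CommRing R]

theorem X_pow_dvd_reverse_sub_reverse_mul_reverse_divByMonic {f : R[X]} (hf : f.Monic) (g : R[X])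
    (hfg : f.natDegree ≤ g.natDegree) :
    X ^ (g.natDegree - f.natDegree + 1) ∣ g.reverse - f.reverse * (g /ₘ f).reverse := by
  nontriviality R
  have hq : (g /ₘ f).natDegree = g.natDegree - f.natDegree := natDegree_divByMonic g hf
  have hrefl : f.reverse * (g /ₘ f).reverse = reflect g.natDegree (f * (g /ₘ f)) := by
    rw [reverse, reverse, hq, ← reflect_mul _ _ le_rfl hq.le, Nat.add_sub_cancel' hfg]
  rw [hrefl, reverse, ← reflect_sub, ← modByMonic_eq_sub_mul_div, ← Nat.sub_add_comm hfg]
  exact X_pow_dvd_reflect_of_degree_lt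
    ((degree_modByMonic_lt g hf).trans_eq (degree_eq_natDegree hf.ne_zero)) _

theorem X_pow_dvd_one_sub_geom_sum_one_sub_mul {u : R[X]} (hu : u.coeff 0 = 1) (k : ℕ) :
    X ^ k ∣ 1 - (∑ i ∈ range k, (1 - u) ^ i) * u := by
  have hgeom := geom_sum_mul_neg (1 - u) k
  rw [sub_sub_cancel] at hgeom
  rw [hgeom, sub_sub_cancel]
  exact pow_dvd_pow_of_dvd (by simp [X_dvd_iff, hu]) k

theorem coeff_geom_sum_one_sub_reverse_mul_reverse {f : R[X]} (hf : f.Monic) (g : R[X])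
    (hfg : f.natDegree ≤ g.natDegree) {j : ℕ} (hj : j ≤ g.natDegree - f.natDegree) :
    ((∑ i ∈ range (g.natDegree - f.natDegree + 1), (1 - f.reverse) ^ i) * g.reverse).coeff j =
      (g /ₘ f).reverse.coeff j := by
  set T := ∑ i ∈ range (g.natDegree - f.natDegree + 1), (1 - f.reverse) ^ i
  have key : X ^ (g.natDegree - f.natDegree + 1) ∣ T * g.reverse - (g /ₘ f).reverse := by
    have hsplit : T * g.reverse - (g /ₘ f).reverse =
        T * (g.reverse - f.reverse * (g /ₘ f).reverse) -
          (1 - T * f.reverse) * (g /ₘ f).reverse := by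
      ring
    rw [hsplit]
    exact dvd_sub
      (dvd_mul_of_dvd_right (X_pow_dvd_reverse_sub_reverse_mul_reverse_divByMonic hf g hfg) _)
      (dvd_mul_of_dvd_left
        (X_pow_dvd_one_sub_geom_sum_one_sub_mul (by simp [hf.leadingCoeff]) _) _)
  have hcoeff := X_pow_dvd_iff.mp key j (by omega)
  rwa [coeff_sub, sub_eq_zero] at hcoeff

theorem coeff_eq_coeff_reverse_natDegree_sub (p : R[X]) {i : ℕ} (hi : i ≤ p.natDegree) :
    p.coeff i = p.reverse.coeff (p.natDegree - i) := by
  rw [coeff_reverse, revAt_le (Nat.sub_le _ _), Nat.sub_sub_self hi]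

end Polynomial

theorem stmt11_general {F : Type*} [Field F] (n m : ℕ) (g f : Polynomial F)
    (hf : f.Monic) (hgn : g.natDegree = n) (hfm : f.natDegree = m)
    (hmn : m ≤ n) :
    (∀ j : ℕ, j ≤ n - m →
        ((∑ i ∈ Finset.range (n - m + 1), (1 - f.reverse) ^ i) * g.reverse).coeff j
          = (g /ₘ f).reverse.coeff j) ∧
    (∀ i : ℕ, i ≤ n - m →
        (g /ₘ f).coeff i
          = ((∑ i ∈ Finset.range (n - m + 1), (1 - f.reverse) ^ i) * g.reverse).coeff (n - m - i)) := by
  subst hgn hfm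
  have hq : (g /ₘ f).natDegree = g.natDegree - f.natDegree := natDegree_divByMonic g hf
  refine ⟨fun j hj => coeff_geom_sum_one_sub_reverse_mul_reverse hf g hmn hj, fun i hi => ?_⟩
  rw [coeff_geom_sum_one_sub_reverse_mul_reverse hf g hmn (Nat.sub_le _ _), ← hq,
    ← coeff_eq_coeff_reverse_natDegree_sub _ (hq ▸ hi)]

theorem stmt11 {F : Type*} [Field F] (n m : ℕ) (g f : Polynomial F)
    (hg : g.Monic) (hf : f.Monic) (hgn : g.natDegree = n) (hfm : f.natDegree = m)
    (hmn : m ≤ n) :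
    (∀ j : ℕ, j ≤ n - m →
        ((∑ i ∈ Finset.range (n - m + 1), (1 - f.reverse) ^ i) * g.reverse).coeff j
          = (g /ₘ f).reverse.coeff j) ∧
    (∀ i : ℕ, i ≤ n - m →
        (g /ₘ f).coeff i
          = ((∑ i ∈ Finset.range (n - m + 1), (1 - f.reverse) ^ i) * g.reverse).coeff (n - m - i)) :=
  stmt11_general n m g f hf hgn hfm hmn
end

section
/- Let A be the weighted adjacency matrix of a graph over a commutative ring, let x be a formal variable, and A_H = ∑_{i=0}^{k} (xA)^i over R[x]. If A' = A + Δ where Δ is supported on entries (u,v) with u ∈ U_i and v ∈ U_o for disjoint vertex sets U_i, U_o, then for vertices s,t ∉ U_i ∪ U_o, the coefficient of x^j (for j ≤ k) in ∑_{i=0}^{k}(xA')^i evaluated at (s,t) depends only on the entries of A_H restricted to ({s,t} ∪ U_i ∪ U_o) × ({s,t} ∪ U_i ∪ U_o) together with Δ. -/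
/-!
The coefficient of `x ^ j` in `∑_{i ≤ k} (x A)^i` is `A ^ j`, so the hypothesis says that the
powers `A ^ i` and `B ^ i`, `i ≤ k`, agree on the corner `P * _ * P` cut out by the coordinate
projection `P` onto `S = {s, t} ∪ Uᵢ ∪ Uₒ`, and `Δ = P * Δ * P`. Expanding
`(A + Δ) ^ (j + 1) = A ^ (j + 1) + ∑_{p + q = j} A ^ p * Δ * (A + Δ) ^ q` and inserting
`Δ = P * Δ * P` writes the corner of `(A + Δ) ^ (j + 1)` through corners of powers of `A`, `Δ`
and lower corners of powers of `A + Δ` alone, so induction on `j` finishes the proof.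
-/

open Finset Polynomial

section Corner

variable {α : Type*} [Semiring α]

theorem add_pow_succ_eq_pow_add_sum (a b : α) (j : ℕ) :
    (a + b) ^ (j + 1) = a ^ (j + 1) + ∑ q ∈ antidiagonal j, a ^ q.1 * b * (a + b) ^ q.2 := by
  induction j with
  | zero => simp
  | succ j ih =>
    rw [pow_succ', add_mul]
    nth_rw 1 [ih]
    rw [mul_add, Nat.sum_antidiagonal_succ, Finset.mul_sum]
    simp only [← mul_assoc, ← pow_succ', pow_zero, one_mul]
    abel

theorem corner_add_pow_eq_of_corner_pow_eq {p a a' b : α} {k : ℕ} (hb : p * b * p = b)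
    (ha : ∀ i ≤ k, p * a ^ i * p = p * a' ^ i * p) :
    ∀ j ≤ k, p * (a + b) ^ j * p = p * (a' + b) ^ j * p := by
  intro j
  induction j using Nat.strong_induction_on with
  | _ j ih =>
    intro hj
    cases j with
    | zero => simp
    | succ j =>
      have hterm : ∀ q ∈ antidiagonal j,
          p * (a ^ q.1 * b * (a + b) ^ q.2) * p = p * (a' ^ q.1 * b * (a' + b) ^ q.2) * p := by
        intro q hq
        have hq : q.1 + q.2 = j := mem_antidiagonal.mp hq
        calc p * (a ^ q.1 * b * (a + b) ^ q.2) * p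
            = p * a ^ q.1 * (p * b * p) * (a + b) ^ q.2 * p := by rw [hb]; simp only [mul_assoc]
          _ = (p * a ^ q.1 * p) * b * (p * (a + b) ^ q.2 * p) := by simp only [mul_assoc]
          _ = (p * a' ^ q.1 * p) * b * (p * (a' + b) ^ q.2 * p) := by
              rw [ha q.1 (by omega), ih q.2 (by omega) (by omega)]
          _ = p * a' ^ q.1 * (p * b * p) * (a' + b) ^ q.2 * p := by simp only [mul_assoc]
          _ = p * (a' ^ q.1 * b * (a' + b) ^ q.2) * p := by rw [hb]; simp only [mul_assoc]
      rw [add_pow_succ_eq_pow_add_sum, add_pow_succ_eq_pow_add_sum, mul_add, add_mul, mul_add,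
        add_mul, ha (j + 1) hj, Finset.mul_sum, Finset.sum_mul, Finset.mul_sum, Finset.sum_mul,
        Finset.sum_congr rfl hterm]

end Corner

namespace Matrix

variable {m R : Type*} [Fintype m] [DecidableEq m]

def projOn [Zero R] [One R] (S : Finset m) : Matrix m m R :=
  diagonal fun i => if i ∈ S then 1 else 0

theorem projOn_mul_mul_projOn_apply [Semiring R] (S : Finset m) (M : Matrix m m R) (u v : m) :
    (projOn S * M * projOn S : Matrix m m R) u v = if u ∈ S ∧ v ∈ S then M u v else 0 := by
  simp only [projOn, mul_diagonal, diagonal_mul]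
  split_ifs <;> simp_all

theorem projOn_mul_mul_projOn_eq_self [Semiring R] {S : Finset m} {N : Matrix m m R}
    (hN : ∀ u v, N u v ≠ 0 → u ∈ S ∧ v ∈ S) : projOn S * N * projOn S = N := by
  ext u v
  rw [projOn_mul_mul_projOn_apply]
  split_ifs with h
  · rfl
  · by_contra hne
    exact h (hN u v (Ne.symm hne))

theorem projOn_mul_mul_projOn_eq_iff [Semiring R] {S : Finset m} {M M' : Matrix m m R} :
    projOn S * M * projOn S = projOn S * M' * projOn S ↔
      ∀ u ∈ S, ∀ v ∈ S, M u v = M' u v := by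
  refine ⟨fun h u hu v hv => ?_, fun h => ?_⟩
  · simpa [projOn_mul_mul_projOn_apply, hu, hv] using congrFun (congrFun h u) v
  · ext u v
    simp only [projOn_mul_mul_projOn_apply]
    split_ifs with huv
    · exact h u huv.1 v huv.2
    · rfl

theorem coeff_sum_range_X_smul_map_C_pow_apply [CommSemiring R] (M : Matrix m m R)
    {j k : ℕ} (hj : j ≤ k) (u v : m) :
    ((∑ i ∈ range (k + 1), ((X : R[X]) • M.map C) ^ i) u v).coeff j = (M ^ j) u v := by
  have hpow (i : ℕ) : ((X : R[X]) • M.map C) ^ i = (X : R[X]) ^ i • (M ^ i).map C := by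
    rw [_root_.smul_pow, ← RingHom.mapMatrix_apply, ← map_pow, RingHom.mapMatrix_apply]
  simp only [hpow, sum_apply, smul_apply, map_apply, smul_eq_mul, finsetSum_coeff,
    mul_comm _ (C _), coeff_C_mul_X_pow]
  rw [Finset.sum_ite_eq, if_pos (mem_range.mpr (Nat.lt_succ_of_le hj))]

end Matrix

open Matrix in
theorem stmt17_general {R : Type*} [CommRing R] (n k : ℕ)
    (A B Δ : Matrix (Fin n) (Fin n) R)
    (Ui Uo : Finset (Fin n))
    (hsupp : ∀ u v, Δ u v ≠ 0 → u ∈ Ui ∧ v ∈ Uo)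
    (s t : Fin n)
    (hagree : ∀ u v : Fin n,
        u ∈ insert s (insert t (Ui ∪ Uo)) → v ∈ insert s (insert t (Ui ∪ Uo)) →
        (∑ i ∈ Finset.range (k + 1),
            ((Polynomial.X : Polynomial R) • A.map Polynomial.C) ^ i) u v
          = (∑ i ∈ Finset.range (k + 1),
              ((Polynomial.X : Polynomial R) • B.map Polynomial.C) ^ i) u v) :
    ∀ j : ℕ, j ≤ k →
      ((∑ i ∈ Finset.range (k + 1),
          ((Polynomial.X : Polynomial R) • (A + Δ).map Polynomial.C) ^ i) s t).coeff j
        = ((∑ i ∈ Finset.range (k + 1),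
            ((Polynomial.X : Polynomial R) • (B + Δ).map Polynomial.C) ^ i) s t).coeff j := by
  intro j hj
  set S := insert s (insert t (Ui ∪ Uo))
  have hΔ : projOn S * Δ * projOn S = Δ := projOn_mul_mul_projOn_eq_self fun u v huv => by
    obtain ⟨hu, hv⟩ := hsupp u v huv
    exact ⟨by simp [S, hu], by simp [S, hv]⟩
  have hpow : ∀ i ≤ k, projOn S * A ^ i * projOn S = projOn S * B ^ i * projOn S :=
    fun i hi => projOn_mul_mul_projOn_eq_iff.mpr fun u hu v hv => by
      simpa only [coeff_sum_range_X_smul_map_C_pow_apply _ hi] using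
        congrArg (coeff · i) (hagree u v hu hv)
  rw [coeff_sum_range_X_smul_map_C_pow_apply _ hj, coeff_sum_range_X_smul_map_C_pow_apply _ hj]
  exact projOn_mul_mul_projOn_eq_iff.mp (corner_add_pow_eq_of_corner_pow_eq hΔ hpow j hj)
    s (by simp [S]) t (by simp [S])

/-- Hesse-style locality: the low-degree coefficients of the walk generating
function of the updated matrix depend only on the restriction of the original
walk generating function to the affected vertices (plus `s`, `t`) and on `Δ`. -/
theorem stmt17 {R : Type*} [CommRing R] (n k : ℕ)
    (A B Δ : Matrix (Fin n) (Fin n) R)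
    (Ui Uo : Finset (Fin n)) (hdisj : Disjoint Ui Uo)
    (hsupp : ∀ u v, Δ u v ≠ 0 → u ∈ Ui ∧ v ∈ Uo)
    (s t : Fin n) (hs : s ∉ Ui ∪ Uo) (ht : t ∉ Ui ∪ Uo)
    (hagree : ∀ u v : Fin n,
        u ∈ insert s (insert t (Ui ∪ Uo)) → v ∈ insert s (insert t (Ui ∪ Uo)) →
        (∑ i ∈ Finset.range (k + 1),
            ((Polynomial.X : Polynomial R) • A.map Polynomial.C) ^ i) u v
          = (∑ i ∈ Finset.range (k + 1),
              ((Polynomial.X : Polynomial R) • B.map Polynomial.C) ^ i) u v) :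
    ∀ j : ℕ, j ≤ k →
      ((∑ i ∈ Finset.range (k + 1),
          ((Polynomial.X : Polynomial R) • (A + Δ).map Polynomial.C) ^ i) s t).coeff j
        = ((∑ i ∈ Finset.range (k + 1),
            ((Polynomial.X : Polynomial R) • (B + Δ).map Polynomial.C) ^ i) s t).coeff j :=
  stmt17_general n k A B Δ Ui Uo hsupp s t hagree
end
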